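/- arXiv:1911.11047 — 5 statements merged into one kernel-verified Lean document; each statement's English description precedes it below -/
import Mathlib

section
/- For every matrix U in the set 𝒰ₙ of upper triangular n×n complex matrices with 1's on the diagonal and every i with 1 ≤ i ≤ n−1, the matrix A^{βᵢ}(U) is invertible (its determinant equals −1 up to sign, coming from the 2×2 block with zero (i,i)-entry), and the matrix A^{βᵢ}(U)·U·A^{βᵢ}(U) again belongs to 𝒰ₙ. Consequently the map Tᵢ(U,C) := (A^{βᵢ}(U)·U·A^{βᵢ}(U), C·A^{βᵢ}(U)^{−1}) sends 𝒰ₙ × GL(n,ℂ) to itself. -/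
open Matrix

/-- The set `𝒰ₙ` of upper triangular `n × n` complex matrices with `1`'s on the diagonal. -/
def upperUnitriangular (n : ℕ) : Set (Matrix (Fin n) (Fin n) ℂ) :=
  {U | (∀ a b : Fin n, b < a → U a b = 0) ∧ ∀ a : Fin n, U a a = 1}

/-- The matrix `A^{βᵢ}(U)`: identity outside rows/columns `i, i'` (where `i' = i+1`),
with `(i,i)`-entry `0`, `(i,i')`- and `(i',i)`-entries `1`, and `(i',i')`-entry `-U i i'`. -/
def braidMat {n : ℕ} (U : Matrix (Fin n) (Fin n) ℂ) (i i' : Fin n) :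
    Matrix (Fin n) (Fin n) ℂ := fun a b =>
  if a = i ∧ b = i' then 1
  else if a = i' ∧ b = i then 1
  else if a = i' ∧ b = i' then -U i i'
  else if a = b ∧ a ≠ i ∧ a ≠ i' then 1
  else 0


/-!
Writing `P` for the permutation matrix of the transposition `(i i+1)` and `T` for the
transvection `1 - U i (i+1) • E i (i+1)`, one has `A^{βᵢ}(U) = P * T`. Hence its determinant
is the sign of a transposition, and `A U A = (P (T U) P) T`. Left multiplication by `T`
clears the `(i, i+1)` entry of `U`, and that entry is the only one that conjugation by the
adjacent transposition `P` moves below the diagonal.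
-/

theorem Equiv.swap_lt_swap_of_covBy {m : Type*} [LinearOrder m] {i j a b : m} (hij : i ⋖ j)
    (hba : b < a) (hne : ¬(a = j ∧ b = i)) : Equiv.swap i j b < Equiv.swap i j a := by
  have := hij.lt
  have := @hij.le_of_lt
  have := @hij.ge_of_gt
  simp only [Equiv.swap_apply_def]
  split_ifs <;> grind

namespace Matrix

variable {m R : Type*} [LinearOrder m]

theorem IsUpperTriangular.mul_apply_self [Fintype m] [NonUnitalNonAssocSemiring R]
    {M N : Matrix m m R} (hM : M.IsUpperTriangular) (hN : N.IsUpperTriangular) (a : m) :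
    (M * N) a a = M a a * N a a := by
  rw [mul_apply, Finset.sum_eq_single a]
  · intro k _ hka
    rcases hka.lt_or_gt with hk | hk
    · rw [hM hk, zero_mul]
    · rw [hN hk, mul_zero]
  · simp

theorem IsUpperTriangular.submatrix_swap_of_covBy [Zero R] {M : Matrix m m R} {i j : m}
    (hM : M.IsUpperTriangular) (hij : i ⋖ j) (hMij : M i j = 0) :
    (M.submatrix (Equiv.swap i j) (Equiv.swap i j)).IsUpperTriangular := by
  intro a b hba
  by_cases hab : a = j ∧ b = i
  · obtain ⟨rfl, rfl⟩ := hab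
    simpa using hMij
  · exact hM (Equiv.swap_lt_swap_of_covBy hij hba hab)

end Matrix

theorem mem_upperUnitriangular_iff {n : ℕ} {M : Matrix (Fin n) (Fin n) ℂ} :
    M ∈ upperUnitriangular n ↔ M.IsUpperTriangular ∧ ∀ a, M a a = 1 :=
  Iff.rfl

theorem mul_mem_upperUnitriangular {n : ℕ} {M N : Matrix (Fin n) (Fin n) ℂ}
    (hM : M ∈ upperUnitriangular n) (hN : N ∈ upperUnitriangular n) :
    M * N ∈ upperUnitriangular n := by
  obtain ⟨hMt, hMd⟩ := mem_upperUnitriangular_iff.1 hM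
  obtain ⟨hNt, hNd⟩ := mem_upperUnitriangular_iff.1 hN
  exact ⟨hMt.mul hNt, fun a => by rw [hMt.mul_apply_self hNt, hMd, hNd, one_mul]⟩

theorem transvection_mem_upperUnitriangular {n : ℕ} {i j : Fin n} (hij : i < j) (c : ℂ) :
    transvection i j c ∈ upperUnitriangular n :=
  ⟨blockTriangular_transvection hij.le c, fun a => by
    rw [transvection, Matrix.add_apply, one_apply_eq, single_apply,
      if_neg fun h => hij.ne (h.1.trans h.2.symm), add_zero]⟩

theorem submatrix_swap_mem_upperUnitriangular {n : ℕ} {M : Matrix (Fin n) (Fin n) ℂ}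
    (hM : M ∈ upperUnitriangular n) {i j : Fin n} (hij : i ⋖ j) (hMij : M i j = 0) :
    M.submatrix (Equiv.swap i j) (Equiv.swap i j) ∈ upperUnitriangular n := by
  obtain ⟨hMt, hMd⟩ := mem_upperUnitriangular_iff.1 hM
  exact ⟨hMt.submatrix_swap_of_covBy hij hMij, fun a => hMd _⟩

theorem braidMat_eq_swap_mul_transvection {n : ℕ} (U : Matrix (Fin n) (Fin n) ℂ) {i j : Fin n}
    (hij : i ≠ j) :
    braidMat U i j = (Equiv.swap i j).toPEquiv.toMatrix * transvection i j (-U i j) := by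
  ext a b
  rw [PEquiv.toMatrix_toPEquiv_mul, submatrix_apply, id_eq]
  simp only [braidMat, transvection, Equiv.swap_apply_def, Matrix.add_apply, one_apply,
    single_apply]
  split_ifs <;> grind

theorem det_braidMat {n : ℕ} (U : Matrix (Fin n) (Fin n) ℂ) {i j : Fin n} (hij : i ≠ j) :
    (braidMat U i j).det = -1 := by
  rw [braidMat_eq_swap_mul_transvection U hij, det_mul, det_transvection_of_ne _ _ hij, mul_one,
    ← Equiv.Perm.permMatrix, det_permutation, Equiv.Perm.sign_swap hij]
  simp

theorem braidMat_mul_mul_braidMat_mem {n : ℕ} {U : Matrix (Fin n) (Fin n) ℂ}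
    (hU : U ∈ upperUnitriangular n) {i j : Fin n} (hij : i ⋖ j) :
    braidMat U i j * U * braidMat U i j ∈ upperUnitriangular n := by
  set T := transvection i j (-U i j)
  have hT : T ∈ upperUnitriangular n := transvection_mem_upperUnitriangular hij.lt _
  have hTU_ij : (T * U) i j = 0 := by
    rw [transvection_mul_apply_same, hU.2 j]
    ring
  have hfactor : braidMat U i j * U * braidMat U i j =
      (T * U).submatrix (Equiv.swap i j) (Equiv.swap i j) * T := by
    rw [braidMat_eq_swap_mul_transvection U hij.ne, ← Matrix.mul_assoc, Matrix.mul_assoc _ T U,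
      PEquiv.toMatrix_toPEquiv_mul, PEquiv.mul_toMatrix_toPEquiv, submatrix_submatrix,
      Equiv.symm_swap]
    rfl
  rw [hfactor]
  exact mul_mem_upperUnitriangular
    (submatrix_swap_mem_upperUnitriangular (mul_mem_upperUnitriangular hT hU) hij hTU_ij) hT

theorem stmt0 (n : ℕ) (i : Fin n) (h : (i : ℕ) + 1 < n)
    (U : Matrix (Fin n) (Fin n) ℂ) (hU : U ∈ upperUnitriangular n)
    (C : Matrix (Fin n) (Fin n) ℂ) (hC : IsUnit C) :
    (braidMat U i ⟨(i : ℕ) + 1, h⟩).det = -1 ∧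
    IsUnit (braidMat U i ⟨(i : ℕ) + 1, h⟩) ∧
    braidMat U i ⟨(i : ℕ) + 1, h⟩ * U * braidMat U i ⟨(i : ℕ) + 1, h⟩ ∈
      upperUnitriangular n ∧
    IsUnit (C * (braidMat U i ⟨(i : ℕ) + 1, h⟩)⁻¹) := by
  have hcov : i ⋖ ⟨(i : ℕ) + 1, h⟩ := Fin.covBy_iff.2 (Order.covBy_add_one _)
  have hdet := det_braidMat U hcov.ne
  have hunit : IsUnit (braidMat U i ⟨(i : ℕ) + 1, h⟩) := by
    rw [isUnit_iff_isUnit_det, hdet]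
    exact isUnit_one.neg
  exact ⟨hdet, hunit, braidMat_mul_mul_braidMat_mem hU hcov,
    hC.mul (isUnit_nonsing_inv_iff.2 hunit)⟩
end

section
/- The maps Tᵢ on 𝒰ₙ × GL(n,ℂ) satisfy the far commutation relations of the braid group: for all indices i, j with 1 ≤ i, j ≤ n−1 and |i−j| > 1, one has Tᵢ ∘ Tⱼ = Tⱼ ∘ Tᵢ as maps from 𝒰ₙ × GL(n,ℂ) to itself. -/
open Matrix

/-- The map `Tᵢ(U, C) = (A^{βᵢ}(U)·U·A^{βᵢ}(U), C·A^{βᵢ}(U)⁻¹)`, where the pair `(i, i')`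
consists of the `i`-th and `(i+1)`-th indices. -/
noncomputable def Tmap {n : ℕ} (i i' : Fin n)
    (p : Matrix (Fin n) (Fin n) ℂ × Matrix (Fin n) (Fin n) ℂ) :
    Matrix (Fin n) (Fin n) ℂ × Matrix (Fin n) (Fin n) ℂ :=
  (braidMat p.1 i i' * p.1 * braidMat p.1 i i', p.2 * (braidMat p.1 i i')⁻¹)

/-! `A^{βᵢ}(U)` differs from the identity only in the `2 × 2` block on the indices `i, i+1`, and
depends on `U` only through the entry `U i (i+1)`. For `|i - j| > 1` the two blocks are disjoint, so
`A^{βᵢ}` and `A^{βⱼ}` commute, and conjugating `U` by `A^{βⱼ}` leaves the entry read off by `A^{βᵢ}`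
unchanged. Hence both orders of composition multiply by the same commuting pair of matrices. -/

theorem Matrix.mul_eq_zero_of_disjoint {l m o α : Type*} [Fintype m]
    [NonUnitalNonAssocSemiring α] {s t : Set m} (hst : Disjoint s t) (M : Matrix l m α)
    (N : Matrix m o α) (hM : ∀ a c, c ∉ s → M a c = 0) (hN : ∀ c b, c ∉ t → N c b = 0) :
    M * N = 0 := by
  ext a b
  refine Finset.sum_eq_zero fun c _ => ?_
  by_cases hc : c ∈ s
  · simp [hN c b (Set.disjoint_left.mp hst hc)]
  · simp [hM a c hc]

theorem commute_of_sub_one_mul_sub_one_eq_zero {α : Type*} [Ring α] {X Y : α}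
    (hXY : (X - 1) * (Y - 1) = 0) (hYX : (Y - 1) * (X - 1) = 0) : Commute X Y := by
  have h : Commute (X - 1) (Y - 1) := hXY.trans hYX.symm
  simpa using (h.add_right (Commute.one_right _)).add_left (Commute.one_left _)

section BraidMat

variable {n : ℕ}

theorem braidMat_apply_of_row_ne (U : Matrix (Fin n) (Fin n) ℂ) {i i' a : Fin n} (b : Fin n)
    (hi : a ≠ i) (hi' : a ≠ i') : braidMat U i i' a b = (1 : Matrix (Fin n) (Fin n) ℂ) a b := by
  unfold braidMat
  simp only [hi, hi', false_and, if_false, one_apply]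
  rcases eq_or_ne a b with rfl | hab <;> simp [*]

theorem braidMat_apply_of_col_ne (U : Matrix (Fin n) (Fin n) ℂ) {i i' b : Fin n} (a : Fin n)
    (hi : b ≠ i) (hi' : b ≠ i') : braidMat U i i' a b = (1 : Matrix (Fin n) (Fin n) ℂ) a b := by
  unfold braidMat
  simp only [hi, hi', and_false, if_false, one_apply]
  rcases eq_or_ne a b with rfl | hab <;> simp [*]

theorem braidMat_sub_one_apply_of_row_ne (U : Matrix (Fin n) (Fin n) ℂ) {i i' a : Fin n}
    (b : Fin n) (ha : a ∉ ({i, i'} : Set (Fin n))) : (braidMat U i i' - 1) a b = 0 := by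
  simp only [Set.mem_insert_iff, Set.mem_singleton_iff, not_or] at ha
  rw [Matrix.sub_apply, braidMat_apply_of_row_ne U b ha.1 ha.2, sub_self]

theorem braidMat_sub_one_apply_of_col_ne (U : Matrix (Fin n) (Fin n) ℂ) {i i' b : Fin n}
    (a : Fin n) (hb : b ∉ ({i, i'} : Set (Fin n))) : (braidMat U i i' - 1) a b = 0 := by
  simp only [Set.mem_insert_iff, Set.mem_singleton_iff, not_or] at hb
  rw [Matrix.sub_apply, braidMat_apply_of_col_ne U a hb.1 hb.2, sub_self]

theorem braidMat_commute (U V : Matrix (Fin n) (Fin n) ℂ) {i i' j j' : Fin n}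
    (h : Disjoint ({i, i'} : Set (Fin n)) {j, j'}) :
    Commute (braidMat U i i') (braidMat V j j') :=
  commute_of_sub_one_mul_sub_one_eq_zero
    (mul_eq_zero_of_disjoint h _ _ (fun a _ hc => braidMat_sub_one_apply_of_col_ne U a hc)
      (fun _ b hc => braidMat_sub_one_apply_of_row_ne V b hc))
    (mul_eq_zero_of_disjoint h.symm _ _ (fun a _ hc => braidMat_sub_one_apply_of_col_ne V a hc)
      (fun _ b hc => braidMat_sub_one_apply_of_row_ne U b hc))

theorem braidMat_congr {U V : Matrix (Fin n) (Fin n) ℂ} {i i' : Fin n} (h : U i i' = V i i') :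
    braidMat U i i' = braidMat V i i' := by
  ext a b
  simp only [braidMat, h]

theorem braidMat_mul_apply_of_row_ne (U M : Matrix (Fin n) (Fin n) ℂ) {j j' a : Fin n}
    (b : Fin n) (ha : a ≠ j) (ha' : a ≠ j') : (braidMat U j j' * M) a b = M a b := by
  simp only [mul_apply, braidMat_apply_of_row_ne U _ ha ha']
  rw [← mul_apply, one_mul]

theorem mul_braidMat_apply_of_col_ne (U M : Matrix (Fin n) (Fin n) ℂ) {j j' b : Fin n}
    (a : Fin n) (hb : b ≠ j) (hb' : b ≠ j') : (M * braidMat U j j') a b = M a b := by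
  simp only [mul_apply, braidMat_apply_of_col_ne U _ hb hb']
  rw [← mul_apply, mul_one]

theorem Tmap_comm {i i' j j' : Fin n} (h : Disjoint ({i, i'} : Set (Fin n)) {j, j'})
    (p : Matrix (Fin n) (Fin n) ℂ × Matrix (Fin n) (Fin n) ℂ) :
    Tmap i i' (Tmap j j' p) = Tmap j j' (Tmap i i' p) := by
  obtain ⟨U, C⟩ := p
  have hne {a b : Fin n} (ha : a ∈ ({i, i'} : Set (Fin n))) (hb : b ∈ ({j, j'} : Set (Fin n))) :
      a ≠ b := fun hab => Set.disjoint_left.mp h ha (hab ▸ hb)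
  have hij : i ≠ j := hne (by simp) (by simp)
  have hij' : i ≠ j' := hne (by simp) (by simp)
  have hi'j : i' ≠ j := hne (by simp) (by simp)
  have hi'j' : i' ≠ j' := hne (by simp) (by simp)
  set A := braidMat U i i'
  set B := braidMat U j j'
  have hAB : Commute A B := braidMat_commute U U h
  have hA : braidMat (B * U * B) i i' = A := braidMat_congr <| by
    rw [mul_braidMat_apply_of_col_ne U _ _ hi'j hi'j', braidMat_mul_apply_of_row_ne U U _ hij hij']
  have hB : braidMat (A * U * A) j j' = B := braidMat_congr <| by
    rw [mul_braidMat_apply_of_col_ne U _ _ hij'.symm hi'j'.symm,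
      braidMat_mul_apply_of_row_ne U U _ hij.symm hi'j.symm]
  have hAB_inv : Commute A⁻¹ B⁻¹ := by
    simpa only [nonsing_inv_eq_ringInverse] using hAB.ringInverse_ringInverse
  simp only [Tmap]
  rw [hA, hB, Prod.mk.injEq, mul_assoc C, mul_assoc C, hAB_inv.eq]
  refine ⟨?_, rfl⟩
  calc A * (B * U * B) * A = A * B * U * (B * A) := by noncomm_ring
    _ = B * A * U * (A * B) := by rw [hAB.eq]
    _ = B * (A * U * A) * B := by noncomm_ring

end BraidMat

theorem stmt1_general (n : ℕ) (i j : Fin n) (hi : (i : ℕ) + 1 < n) (hj : (j : ℕ) + 1 < n)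
    (hij : (i : ℕ) + 1 < j ∨ (j : ℕ) + 1 < i)
    (U C : Matrix (Fin n) (Fin n) ℂ) :
    Tmap i ⟨(i : ℕ) + 1, hi⟩ (Tmap j ⟨(j : ℕ) + 1, hj⟩ (U, C)) =
      Tmap j ⟨(j : ℕ) + 1, hj⟩ (Tmap i ⟨(i : ℕ) + 1, hi⟩ (U, C)) := by
  refine Tmap_comm ?_ _
  simp only [Set.disjoint_insert_left, Set.disjoint_insert_right, Set.mem_insert_iff,
    Set.mem_singleton_iff, Set.disjoint_singleton, ne_eq, Fin.ext_iff, not_or]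
  omega

theorem stmt1 (n : ℕ) (i j : Fin n) (hi : (i : ℕ) + 1 < n) (hj : (j : ℕ) + 1 < n)
    (hij : (i : ℕ) + 1 < j ∨ (j : ℕ) + 1 < i)
    (U C : Matrix (Fin n) (Fin n) ℂ)
    (hU : U ∈ upperUnitriangular n) (hC : IsUnit C) :
    Tmap i ⟨(i : ℕ) + 1, hi⟩ (Tmap j ⟨(j : ℕ) + 1, hj⟩ (U, C)) =
      Tmap j ⟨(j : ℕ) + 1, hj⟩ (Tmap i ⟨(i : ℕ) + 1, hi⟩ (U, C)) :=
  stmt1_general n i j hi hj hij U C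
end

section
/- The maps Tᵢ on 𝒰ₙ × GL(n,ℂ) satisfy the braid relations: for all i with 1 ≤ i ≤ n−2, one has Tᵢ ∘ Tᵢ₊₁ ∘ Tᵢ = Tᵢ₊₁ ∘ Tᵢ ∘ Tᵢ₊₁ as maps from 𝒰ₙ × GL(n,ℂ) to itself. -/
open Matrix

/-- The elementary braid matrix with parameter `c`. -/
def braidE {n : ℕ} (c : ℂ) (i j : Fin n) : Matrix (Fin n) (Fin n) ℂ := fun a b =>
  if a = i ∧ b = j then 1
  else if a = j ∧ b = i then 1
  else if a = j ∧ b = j then -c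
  else if a = b ∧ a ≠ i ∧ a ≠ j then 1
  else 0

lemma braidMat_eq_braidE {n : ℕ} (U : Matrix (Fin n) (Fin n) ℂ) (i j : Fin n) :
    braidMat U i j = braidE (U i j) i j := rfl

lemma mul_braidE_apply {n : ℕ} (M : Matrix (Fin n) (Fin n) ℂ) (c : ℂ) {i j : Fin n}
    (h : i ≠ j) (a b : Fin n) :
    (M * braidE c i j) a b =
      if b = i then M a j else if b = j then M a i - c * M a j else M a b := by
  rw [Matrix.mul_apply]
  split_ifs with h1 h2
  · have hcol : ∀ k, braidE c i j k b = if k = j then (1:ℂ) else 0 := by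
      intro k
      by_cases hk1 : k = i <;> by_cases hk2 : k = j <;> simp_all [braidE, eq_comm]
    simp [hcol, mul_ite, Finset.sum_ite_eq']
  · have hcol : ∀ k, braidE c i j k b =
        (if k = i then (1:ℂ) else 0) + (if k = j then -c else 0) := by
      intro k
      by_cases hk1 : k = i <;> by_cases hk2 : k = j <;> simp_all [braidE, eq_comm]
    simp only [hcol, mul_add, Finset.sum_add_distrib, mul_ite, mul_one, mul_zero, mul_neg,
      Finset.sum_ite_eq', Finset.mem_univ, if_true]
    ring
  · have hcol : ∀ k, braidE c i j k b = if k = b then (1:ℂ) else 0 := by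
      intro k
      by_cases hk1 : k = i <;> by_cases hk2 : k = j <;> by_cases hk3 : k = b <;>
        simp_all [braidE, eq_comm]
    simp [hcol, mul_ite, Finset.sum_ite_eq']

lemma braidE_mul_apply {n : ℕ} (M : Matrix (Fin n) (Fin n) ℂ) (c : ℂ) {i j : Fin n}
    (h : i ≠ j) (a b : Fin n) :
    (braidE c i j * M) a b =
      if a = i then M j b else if a = j then M i b - c * M j b else M a b := by
  rw [Matrix.mul_apply]
  split_ifs with h1 h2
  · have hrow : ∀ k, braidE c i j a k = if k = j then (1:ℂ) else 0 := by
      intro k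
      by_cases hk1 : k = i <;> by_cases hk2 : k = j <;> simp_all [braidE, eq_comm]
    simp [hrow, ite_mul, Finset.sum_ite_eq']
  · have hrow : ∀ k, braidE c i j a k =
        (if k = i then (1:ℂ) else 0) + (if k = j then -c else 0) := by
      intro k
      by_cases hk1 : k = i <;> by_cases hk2 : k = j <;> simp_all [braidE, eq_comm]
    simp only [hrow, add_mul, Finset.sum_add_distrib, ite_mul, one_mul, zero_mul, neg_mul,
      Finset.sum_ite_eq', Finset.mem_univ, if_true]
    ring
  · have hrow : ∀ k, braidE c i j a k = if k = a then (1:ℂ) else 0 := by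
      intro k
      by_cases hk1 : k = i <;> by_cases hk2 : k = j <;> by_cases hk3 : k = a <;>
        simp_all [braidE, eq_comm]
    simp [hrow, ite_mul, Finset.sum_ite_eq']

lemma braidE_transpose {n : ℕ} (c : ℂ) (i j : Fin n) :
    (braidE c i j)ᵀ = braidE c i j := by
  ext a b
  by_cases h1 : a = i <;> by_cases h2 : a = j <;> by_cases h3 : b = i <;> by_cases h4 : b = j <;>
    simp_all [braidE, Matrix.transpose_apply, eq_comm]

lemma braidE_apply_eq {n : ℕ} (c : ℂ) {i j : Fin n} (h : i ≠ j) (a b : Fin n) :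
    braidE c i j a b =
      if a = i then (if b = j then 1 else 0)
      else if a = j then (if b = i then 1 else if b = j then -c else 0)
      else if a = b then 1 else 0 := by
  simp only [braidE]
  by_cases h1 : a = i <;> by_cases h2 : a = j <;> by_cases h3 : b = i <;> by_cases h4 : b = j <;>
    by_cases h5 : a = b <;> simp_all

set_option maxHeartbeats 2000000 in
lemma key3 {n : ℕ} {i j k : Fin n} (h1 : i ≠ j) (h2 : i ≠ k) (h3 : j ≠ k) (u v w : ℂ) :
    braidE v i j * braidE (w - u * v) j k * braidE u i j =
      braidE u j k * braidE w i j * braidE v j k := by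
  ext a b
  simp only [mul_braidE_apply (h := h1), mul_braidE_apply (h := h3),
    braidE_mul_apply (h := h1), braidE_mul_apply (h := h3),
    braidE_apply_eq (h := h1), braidE_apply_eq (h := h2), braidE_apply_eq (h := h3),
    h1, h2, h3, h1.symm, h2.symm, h3.symm, if_true, if_false]
  split_ifs <;> simp_all <;> ring

set_option maxHeartbeats 1000000 in
lemma braid_rel {n : ℕ} {i j k : Fin n} (h1 : i ≠ j) (h2 : i ≠ k) (h3 : j ≠ k)
    (U C : Matrix (Fin n) (Fin n) ℂ) (hz1 : U k j = 0) (hz2 : U k k = 1) :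
    Tmap i j (Tmap j k (Tmap i j (U, C))) = Tmap j k (Tmap i j (Tmap j k (U, C))) := by
  simp only [Tmap, braidMat_eq_braidE]
  set A := braidE (U i j) i j with hA
  have eA : (A * U * A) j k = U i k - U i j * U j k := by
    simp [hA, mul_braidE_apply (h := h1), braidE_mul_apply (h := h1),
      h1, h2, h3, h1.symm, h2.symm, h3.symm]
  rw [eA]
  set B := braidE (U i k - U i j * U j k) j k with hB
  have eB : (B * (A * U * A) * B) i j = U j k := by
    simp [hA, hB, mul_braidE_apply (h := h1), braidE_mul_apply (h := h1),
      mul_braidE_apply (h := h3), braidE_mul_apply (h := h3),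
      h1, h2, h3, h1.symm, h2.symm, h3.symm]
  rw [eB]
  set D := braidE (U j k) i j with hD
  set B' := braidE (U j k) j k with hB'
  have eB' : (B' * U * B') i j = U i k := by
    simp [hB', mul_braidE_apply (h := h3), braidE_mul_apply (h := h3),
      h1, h2, h3, h1.symm, h2.symm, h3.symm]
  rw [eB']
  set A' := braidE (U i k) i j with hA'
  have eA' : (A' * (B' * U * B') * A') j k = U i j := by
    simp [hA', hB', mul_braidE_apply (h := h1), braidE_mul_apply (h := h1),
      mul_braidE_apply (h := h3), braidE_mul_apply (h := h3),
      h1, h2, h3, h1.symm, h2.symm, h3.symm, hz1, hz2]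
    ring
  rw [eA']
  set D' := braidE (U i j) j k with hD'
  have hkey : D * B * A = D' * A' * B' := by
    rw [hA, hB, hD, hA', hB', hD']
    exact key3 h1 h2 h3 (U i j) (U j k) (U i k)
  have htrans : A * B * D = B' * A' * D' := by
    have := congrArg Matrix.transpose hkey
    simpa [Matrix.transpose_mul, hA, hB, hD, hA', hB', hD', braidE_transpose,
      Matrix.mul_assoc] using this
  have comp1 : D * (B * (A * U * A) * B) * D = D * B * A * U * (A * B * D) := by
    simp only [Matrix.mul_assoc]
  have comp1' : D' * (A' * (B' * U * B') * A') * D' = D' * A' * B' * U * (B' * A' * D') := by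
    simp only [Matrix.mul_assoc]
  have comp2 : C * A⁻¹ * B⁻¹ * D⁻¹ = C * (D * B * A)⁻¹ := by
    simp only [Matrix.mul_inv_rev, Matrix.mul_assoc]
  have comp2' : C * B'⁻¹ * A'⁻¹ * D'⁻¹ = C * (D' * A' * B')⁻¹ := by
    simp only [Matrix.mul_inv_rev, Matrix.mul_assoc]
  rw [Prod.mk.injEq]
  constructor
  · rw [comp1, comp1', hkey, htrans]
  · rw [comp2, comp2', hkey]

theorem stmt2 (n : ℕ) (i : Fin n) (h2 : (i : ℕ) + 2 < n)
    (U C : Matrix (Fin n) (Fin n) ℂ)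
    (hU : U ∈ upperUnitriangular n) (hC : IsUnit C) :
    (Tmap i ⟨(i : ℕ) + 1, by omega⟩
      (Tmap ⟨(i : ℕ) + 1, by omega⟩ ⟨(i : ℕ) + 2, h2⟩
        (Tmap i ⟨(i : ℕ) + 1, by omega⟩ (U, C)))) =
    (Tmap ⟨(i : ℕ) + 1, by omega⟩ ⟨(i : ℕ) + 2, h2⟩
      (Tmap i ⟨(i : ℕ) + 1, by omega⟩
        (Tmap ⟨(i : ℕ) + 1, by omega⟩ ⟨(i : ℕ) + 2, h2⟩ (U, C)))) := by
  have hlt1 : (i : ℕ) + 1 < n := by omega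
  have hne1 : i ≠ ⟨(i : ℕ) + 1, hlt1⟩ := by
    intro hcon
    have := congrArg Fin.val hcon
    simp at this
  have hne2 : i ≠ ⟨(i : ℕ) + 2, h2⟩ := by
    intro hcon
    have := congrArg Fin.val hcon
    simp at this
  have hne3 : (⟨(i : ℕ) + 1, hlt1⟩ : Fin n) ≠ ⟨(i : ℕ) + 2, h2⟩ := by
    intro hcon
    have := congrArg Fin.val hcon
    simp at this
  have hz1 : U ⟨(i : ℕ) + 2, h2⟩ ⟨(i : ℕ) + 1, hlt1⟩ = 0 :=
    hU.1 _ _ (by simp [Fin.lt_def])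
  have hz2 : U ⟨(i : ℕ) + 2, h2⟩ ⟨(i : ℕ) + 2, h2⟩ = 1 := hU.2 _
  exact braid_rel hne1 hne2 hne3 U C hz1 hz2
end

section
/- Let μ = diag(μ₁,…,μₙ) be a diagonal complex matrix, R an n×n complex matrix such that R_{αβ} ≠ 0 only if μ_α − μ_β is an integer, η an invertible n×n complex matrix, and C, S invertible n×n complex matrices. Assume the two identities S = C^{−1}·exp(−πi·R)·exp(−πi·μ)·η^{−1}·(Cᵀ)^{−1} and Sᵀ = C^{−1}·exp(πi·R)·exp(πi·μ)·η^{−1}·(Cᵀ)^{−1}. Then C·Sᵀ·S^{−1}·C^{−1} = exp(2πi·μ)·exp(2πi·R). (That is, the constraint C Sᵀ S^{−1} C^{−1} = M₀ on the monodromy data (μ, R, S, C) follows from the other two constraints.) -/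
/-! With `E = exp(πi R)` and `F = exp(πi μ)`, the two factorizations give
`C Sᵀ S⁻¹ C⁻¹ = E F² E`. Conjugation by the diagonal matrix `F² = exp(2πi μ)` multiplies
`R α β` by `exp(2πi (μ α - μ β))`, which is `1` wherever `R α β ≠ 0`; so `F²` commutes with `R`,
hence with `E`, and `E F² E = F² E² = exp(2πi μ) exp(2πi R)`. -/

open Matrix Complex

variable {ι : Type*} [Fintype ι] [DecidableEq ι]

theorem Matrix.conj_mul_inv_eq_of_factorizations {α : Type*} [CommRing α]
    {C η E F S T : Matrix ι ι α} (hC : IsUnit C) (hη : IsUnit η) (hE : IsUnit E)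
    (hF : IsUnit F) (hS : S = C⁻¹ * E⁻¹ * F⁻¹ * η⁻¹ * (Cᵀ)⁻¹)
    (hT : T = C⁻¹ * E * F * η⁻¹ * (Cᵀ)⁻¹) :
    C * T * S⁻¹ * C⁻¹ = E * F * F * E := by
  rw [isUnit_iff_isUnit_det] at hC hη hE hF
  have hCt : IsUnit Cᵀ.det := isUnit_det_transpose C hC
  have hSinv : S⁻¹ = Cᵀ * η * F * E * C := by
    simp only [hS, Matrix.mul_inv_rev, nonsing_inv_nonsing_inv _ hC, nonsing_inv_nonsing_inv _ hCt,
      nonsing_inv_nonsing_inv _ hη, nonsing_inv_nonsing_inv _ hE, nonsing_inv_nonsing_inv _ hF,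
      Matrix.mul_assoc]
  rw [hT, hSinv]
  simp only [Matrix.mul_assoc, mul_nonsing_inv_cancel_left _ _ hC,
    nonsing_inv_mul_cancel_left _ _ hCt, nonsing_inv_mul_cancel_left _ _ hη,
    mul_nonsing_inv _ hC, mul_one]

theorem Matrix.exp_smul_mul_exp_smul_self {𝕂 : Type*} [RCLike 𝕂] (t : 𝕂) (A : Matrix ι ι 𝕂) :
    NormedSpace.exp (t • A) * NormedSpace.exp (t • A) = NormedSpace.exp ((2 * t) • A) := by
  rw [← Matrix.exp_add_of_commute _ _ (Commute.refl _), ← add_smul, two_mul]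

theorem Matrix.commute_exp_two_pi_I_smul_diagonal {μ : ι → ℂ} {R : Matrix ι ι ℂ}
    (hR : ∀ α β, R α β ≠ 0 → ∃ k : ℤ, μ α - μ β = k) :
    Commute (NormedSpace.exp ((2 * Real.pi * I) • diagonal μ)) R := by
  rw [← diagonal_smul, exp_diagonal]
  ext α β
  rw [diagonal_mul, mul_diagonal]
  by_cases hαβ : R α β = 0
  · simp [hαβ]
  obtain ⟨k, hk⟩ := hR α β hαβ
  have hexp : NormedSpace.exp ((2 * Real.pi * I) • μ) α =
      NormedSpace.exp ((2 * Real.pi * I) • μ) β := by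
    simp only [Pi.coe_exp, Pi.smul_apply, smul_eq_mul, ← Complex.exp_eq_exp_ℂ]
    exact Complex.exp_eq_exp_iff_exists_int.mpr ⟨k, by linear_combination 2 * Real.pi * I * hk⟩
  rw [hexp, mul_comm]

theorem stmt5_general (n : ℕ) (μ : Fin n → ℂ) (R η C S : Matrix (Fin n) (Fin n) ℂ)
    (hR : ∀ α β : Fin n, R α β ≠ 0 → ∃ k : ℤ, μ α - μ β = (k : ℂ))
    (hη : IsUnit η) (hC : IsUnit C)
    (h1 : S = C⁻¹ * NormedSpace.exp ((-(Real.pi * I)) • R) *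
        NormedSpace.exp ((-(Real.pi * I)) • (Matrix.diagonal μ)) * η⁻¹ * (Cᵀ)⁻¹)
    (h2 : Sᵀ = C⁻¹ * NormedSpace.exp ((Real.pi * I : ℂ) • R) *
        NormedSpace.exp ((Real.pi * I : ℂ) • (Matrix.diagonal μ)) * η⁻¹ * (Cᵀ)⁻¹) :
    C * Sᵀ * S⁻¹ * C⁻¹ =
      NormedSpace.exp ((2 * Real.pi * I) • (Matrix.diagonal μ)) *
        NormedSpace.exp ((2 * Real.pi * I) • R) := by
  set E := NormedSpace.exp ((Real.pi * I : ℂ) • R)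
  set F := NormedSpace.exp ((Real.pi * I : ℂ) • (Matrix.diagonal μ))
  have hconj : C * Sᵀ * S⁻¹ * C⁻¹ = E * F * F * E := by
    refine conj_mul_inv_eq_of_factorizations hC hη (isUnit_exp _) (isUnit_exp _) ?_ h2
    rw [h1, neg_smul, neg_smul, Matrix.exp_neg, Matrix.exp_neg]
  have hFF : F * F = NormedSpace.exp ((2 * Real.pi * I) • diagonal μ) := by
    rw [exp_smul_mul_exp_smul_self, mul_assoc]
  have hEE : E * E = NormedSpace.exp ((2 * Real.pi * I) • R) := by
    rw [exp_smul_mul_exp_smul_self, mul_assoc]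
  have hcomm : Commute (F * F) E := by
    rw [hFF]
    exact ((commute_exp_two_pi_I_smul_diagonal hR).smul_right _).exp_right
  rw [hconj, Matrix.mul_assoc E F F, ← hcomm.eq, Matrix.mul_assoc, hEE, hFF]

theorem stmt5 (n : ℕ) (μ : Fin n → ℂ) (R η C S : Matrix (Fin n) (Fin n) ℂ)
    (hR : ∀ α β : Fin n, R α β ≠ 0 → ∃ k : ℤ, μ α - μ β = (k : ℂ))
    (hη : IsUnit η) (hC : IsUnit C) (hS : IsUnit S)
    (h1 : S = C⁻¹ * NormedSpace.exp ((-(Real.pi * I)) • R) *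
        NormedSpace.exp ((-(Real.pi * I)) • (Matrix.diagonal μ)) * η⁻¹ * (Cᵀ)⁻¹)
    (h2 : Sᵀ = C⁻¹ * NormedSpace.exp ((Real.pi * I : ℂ) • R) *
        NormedSpace.exp ((Real.pi * I : ℂ) • (Matrix.diagonal μ)) * η⁻¹ * (Cᵀ)⁻¹) :
    C * Sᵀ * S⁻¹ * C⁻¹ =
      NormedSpace.exp ((2 * Real.pi * I) • (Matrix.diagonal μ)) *
        NormedSpace.exp ((2 * Real.pi * I) • R) :=
  stmt5_general n μ R η C S hR hη hC h1 h2
end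

section
/- Fix n ≥ 1 and 1 ≤ k ≤ n. Suppose Ψ is an invertible n×n complex matrix satisfying Ψᵀ·Ψ = η, where η is the n×n matrix with η_{ab} = 1 if a+b = n+1 and 0 otherwise. Let C_k(Ψ) denote the k-th multiplicative compound of Ψ (the matrix of k×k minors, indexed by increasing k-subsets of {1,…,n} in lexicographic order), and set Ψ^𝔾 := i^{k(k−1)/2}·C_k(Ψ). Then (Ψ^𝔾)ᵀ·Ψ^𝔾 = η^𝔾, where η^𝔾 is the matrix with entries (η^𝔾)_{IJ} = 1 if the increasing k-subsets I = {i₁<…<i_k} and J = {j₁<…<j_k} satisfy j_b = n+1−i_{k+1−b} for all b (i.e. J is the order-reversed complement pairing of I), and (η^𝔾)_{IJ} = 0 otherwise; in particular η^𝔾 is a symmetric permutation matrix. -/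
open Matrix Complex

/-- The Gram matrix `η` of the Poincaré pairing of `ℙ^{n-1}` in the basis `(1, σ, …, σ^{n-1})`:
`η_{ab} = 1` iff `a + b = n + 1` in 1-based indices, i.e. `a + b + 1 = n` in 0-based indices. -/
def poincareMetric (n : ℕ) : Matrix (Fin n) (Fin n) ℂ :=
  fun a b => if (a : ℕ) + (b : ℕ) + 1 = n then 1 else 0

/-- The `k`-th multiplicative compound `C_k(X)` of an `n × n` matrix `X`: the matrix of all
`k × k` minors, with rows and columns indexed by the `k`-element subsets of `{1, …, n}`
(each subset enumerated in increasing order). -/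
noncomputable def compound (n k : ℕ) (X : Matrix (Fin n) (Fin n) ℂ) :
    Matrix {s : Finset (Fin n) // s.card = k} {s : Finset (Fin n) // s.card = k} ℂ :=
  fun I J => (X.submatrix (fun a => I.1.orderEmbOfFin I.2 a)
    (fun b => J.1.orderEmbOfFin J.2 b)).det

/-- The Gram matrix `η^𝔾` of the Poincaré pairing of the Grassmannian: `(η^𝔾)_{IJ} = 1` iff
`j_b = n + 1 - i_{k+1-b}` for all `b` (in 1-based values), i.e. iff the enumerations satisfy
`(j_b) + (i_{rev b}) + 1 = n` in 0-based values, and `0` otherwise. -/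
def grassmannMetric (n k : ℕ) :
    Matrix {s : Finset (Fin n) // s.card = k} {s : Finset (Fin n) // s.card = k} ℂ :=
  fun I J =>
    if ∀ b : Fin k,
        ((J.1.orderEmbOfFin J.2 b : Fin n) : ℕ) +
          ((I.1.orderEmbOfFin I.2 (Fin.rev b) : Fin n) : ℕ) + 1 = n
    then 1 else 0

/-! The `k`-th compound is multiplicative (Cauchy–Binet) and commutes with transposition, so
`(Ψ^𝔾)ᵀ Ψ^𝔾 = i^{k(k-1)} C_k(Ψᵀ Ψ) = i^{k(k-1)} C_k(η)`. Since `η` is the permutation matrix of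
`a ↦ n + 1 - a`, its `k × k` minor on rows `I` and columns `J` vanishes unless `J` is the
reflection of `I`, and is then the determinant of the order reversal of `{1, …, k}`, of sign
`(-1)^{k(k-1)/2}`; this cancels `i^{k(k-1)}`. -/

open Finset Equiv

namespace Finset

variable {ι : Type*} [LinearOrder ι] {k : ℕ}

theorem exists_eq_orderEmbOfFin_comp_perm {f : Fin k → ι} (hf : f.Injective) :
    ∃ (s : {s : Finset ι // s.card = k}) (σ : Perm (Fin k)),
      f = s.1.orderEmbOfFin s.2 ∘ σ := by
  let s : {s : Finset ι // s.card = k} :=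
    ⟨univ.image f, by rw [card_image_of_injective _ hf, card_univ, Fintype.card_fin]⟩
  have hsort : f ∘ Tuple.sort f = s.1.orderEmbOfFin s.2 :=
    orderEmbOfFin_unique s.2 (fun a => mem_image_of_mem f (mem_univ _))
      ((Tuple.monotone_sort f).strictMono_of_injective (hf.comp (Tuple.sort f).injective))
  exact ⟨s, (Tuple.sort f)⁻¹, by rw [← hsort]; ext; simp⟩

theorem eq_of_orderEmbOfFin_eq {S T : {s : Finset ι // s.card = k}}
    (h : ∀ b, S.1.orderEmbOfFin S.2 b = T.1.orderEmbOfFin T.2 b) : S = T := by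
  apply Subtype.ext
  calc S.1 = univ.image (S.1.orderEmbOfFin S.2) := (image_orderEmbOfFin_univ S.1 S.2).symm
    _ = univ.image (T.1.orderEmbOfFin T.2) := by congr 1; exact funext h
    _ = T.1 := image_orderEmbOfFin_univ T.1 T.2

end Finset

namespace Matrix

variable {R ι : Type*} [CommRing R] {k : ℕ}

theorem det_submatrix_eq_zero_of_not_injective [DecidableEq ι] (B : Matrix ι (Fin k) R)
    {f : Fin k → ι} (hf : ¬ f.Injective) : (B.submatrix f id).det = 0 := by
  obtain ⟨a, b, hab, hne⟩ := Function.not_injective_iff.mp hf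
  exact det_zero_of_row_eq hne (by ext; simp [hab])

theorem sum_perm_prod_mul_det_submatrix_comp
    (A : Matrix (Fin k) ι R) (B : Matrix ι (Fin k) R) (e : Fin k → ι) :
    ∑ σ : Perm (Fin k), (∏ a, A a (e (σ a))) * (B.submatrix (e ∘ σ) id).det =
      (A.submatrix id e).det * (B.submatrix e id).det := by
  rw [← det_transpose (A.submatrix id e), det_apply', sum_mul]
  refine sum_congr rfl fun σ _ => ?_
  rw [show B.submatrix (e ∘ σ) id = (B.submatrix e id).submatrix σ id from rfl, det_permute]
  simp only [transpose_apply, submatrix_apply, id]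
  ring

variable [Fintype ι]

theorem det_mul_eq_sum_prod_mul_det_submatrix [DecidableEq ι]
    (A : Matrix (Fin k) ι R) (B : Matrix ι (Fin k) R) :
    (A * B).det = ∑ f : Fin k → ι, (∏ a, A a (f a)) * (B.submatrix f id).det := by
  have hrows : (A * B).det = detRowAlternating.toMultilinearMap fun a => ∑ x, A a x • B x := by
    congr
    ext a b
    simp [mul_apply, Finset.sum_apply]
  rw [hrows, MultilinearMap.map_sum]
  simp only [MultilinearMap.map_smul_univ, smul_eq_mul]
  rfl

/-- **Cauchy–Binet formula.** -/
theorem det_mul_eq_sum_det_submatrix_mul_det_submatrix [LinearOrder ι]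
    (A : Matrix (Fin k) ι R) (B : Matrix ι (Fin k) R) :
    (A * B).det = ∑ s : {s : Finset ι // s.card = k},
      (A.submatrix id (s.1.orderEmbOfFin s.2)).det *
        (B.submatrix (s.1.orderEmbOfFin s.2) id).det := by
  let F : (Fin k → ι) → R := fun f => (∏ a, A a (f a)) * (B.submatrix f id).det
  let g : {s : Finset ι // s.card = k} × Perm (Fin k) → Fin k → ι :=
    fun p => p.1.1.orderEmbOfFin p.1.2 ∘ p.2
  have hg : g.Injective := by
    rintro ⟨s, σ⟩ ⟨t, τ⟩ h
    have hrange := congrArg Set.range h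
    simp only [g, σ.surjective.range_comp, τ.surjective.range_comp, range_orderEmbOfFin,
      coe_inj] at hrange
    obtain rfl := Subtype.ext hrange
    exact Prod.ext rfl (Equiv.ext fun a => (s.1.orderEmbOfFin s.2).injective (congrFun h a))
  have hF : ∀ f ∉ univ.image g, F f = 0 := by
    intro f hf
    refine mul_eq_zero_of_right _ (det_submatrix_eq_zero_of_not_injective B fun hinj => hf ?_)
    obtain ⟨s, σ, rfl⟩ := Finset.exists_eq_orderEmbOfFin_comp_perm hinj
    exact mem_image.mpr ⟨(s, σ), mem_univ _, rfl⟩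
  calc (A * B).det = ∑ f, F f := det_mul_eq_sum_prod_mul_det_submatrix A B
    _ = ∑ p, F (g p) := by
      rw [← sum_subset (subset_univ _) fun f _ => hF f, sum_image fun p _ q _ h => hg h]
    _ = _ := by
      rw [← univ_product_univ, sum_product]
      refine sum_congr rfl fun s _ => ?_
      exact sum_perm_prod_mul_det_submatrix_comp A B (s.1.orderEmbOfFin s.2)

end Matrix

theorem Fin.sign_revPerm (k : ℕ) :
    Perm.sign (Fin.revPerm : Perm (Fin k)) = (-1) ^ (k * (k - 1) / 2) := by
  rw [Perm.sign_eq_prod_prod_Iio]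
  have hIio : ∀ j : Fin k, ∏ i ∈ Iio j, (if revPerm i < revPerm j then 1 else -1 : ℤˣ) =
      (-1) ^ (j : ℕ) := by
    intro j
    rw [prod_congr rfl fun i hi => if_neg (by simpa using (mem_Iio.mp hi).le), Finset.prod_const,
      card_Iio]
  simp only [hIio, prod_pow_eq_pow_sum, Fin.sum_univ_eq_sum_range (fun i => i), sum_range_id]

section

variable {n k : ℕ}

theorem compound_transpose (X : Matrix (Fin n) (Fin n) ℂ) :
    compound n k Xᵀ = (compound n k X)ᵀ := by
  ext S T
  exact (det_transpose _).symm

theorem compound_mul (X Y : Matrix (Fin n) (Fin n) ℂ) :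
    compound n k (X * Y) = compound n k X * compound n k Y := by
  ext S T
  rw [compound, submatrix_mul _ _ _ id _ Function.bijective_id,
    det_mul_eq_sum_det_submatrix_mul_det_submatrix]
  rfl

-- `S ↦ {n + 1 - i | i ∈ S}` in 1-based terms: the index of the Poincaré dual Schubert class.
def revSubsets (n k : ℕ) : Perm {s : Finset (Fin n) // s.card = k} :=
  Fin.revPerm.finsetCongr.subtypeEquiv fun s => by simp

theorem orderEmbOfFin_revSubsets (S : {s : Finset (Fin n) // s.card = k}) (b : Fin k) :
    (revSubsets n k S).1.orderEmbOfFin (revSubsets n k S).2 b =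
      (S.1.orderEmbOfFin S.2 b.rev).rev := by
  have hmono : StrictMono fun b : Fin k => (S.1.orderEmbOfFin S.2 b.rev).rev := fun b c hbc => by
    simpa using hbc
  refine (congrFun (orderEmbOfFin_unique _ (fun b => ?_) hmono) b).symm
  simp [revSubsets]

theorem revSubsets_involutive : Function.Involutive (revSubsets n k) := by
  intro S
  ext x
  simp [revSubsets]

theorem poincareMetric_apply (a b : Fin n) :
    poincareMetric n a b = if a.rev = b then 1 else 0 := by
  simp only [poincareMetric, Fin.ext_iff, Fin.val_rev]
  congr 1
  apply propext
  omega

theorem grassmannMetric_eq :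
    grassmannMetric n k = Matrix.of fun S T => if revSubsets n k S = T then 1 else 0 := by
  ext S T
  refine if_congr ⟨fun h => ?_, ?_⟩ rfl rfl
  · refine Finset.eq_of_orderEmbOfFin_eq fun b => Fin.ext ?_
    rw [orderEmbOfFin_revSubsets, Fin.val_rev]
    have := h b
    omega
  · rintro rfl b
    rw [orderEmbOfFin_revSubsets, Fin.val_rev]
    have := (S.1.orderEmbOfFin S.2 b.rev).isLt
    omega

theorem compound_poincareMetric :
    compound n k (poincareMetric n) = (-1 : ℂ) ^ (k * (k - 1) / 2) • grassmannMetric n k := by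
  ext S T
  rw [grassmannMetric_eq, Matrix.smul_apply, of_apply, smul_eq_mul, mul_ite, mul_one, mul_zero]
  split_ifs with h
  · subst h
    have hperm : (poincareMetric n).submatrix (S.1.orderEmbOfFin S.2)
        ((revSubsets n k S).1.orderEmbOfFin (revSubsets n k S).2) =
        (Fin.revPerm : Perm (Fin k)).permMatrix ℂ := by
      ext a b
      simp [poincareMetric_apply, orderEmbOfFin_revSubsets, PEquiv.toMatrix_apply,
        Fin.rev_eq_iff]
    rw [compound, hperm, det_permutation, Fin.sign_revPerm]
    push_cast
    rfl
  · obtain ⟨x, hxT, hx⟩ := not_subset.mp fun hsub =>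
      h (Subtype.ext (eq_of_subset_of_card_le hsub (by rw [T.2, (revSubsets n k S).2])).symm)
    obtain ⟨b, rfl⟩ : x ∈ Set.range (T.1.orderEmbOfFin T.2) := by
      rw [range_orderEmbOfFin]
      exact hxT
    refine det_eq_zero_of_column_eq_zero b fun a => ?_
    rw [submatrix_apply, poincareMetric_apply, if_neg]
    rintro hab
    exact hx (hab ▸ by simp [revSubsets])

end

theorem stmt14_general (n k : ℕ)
    (Ψ : Matrix (Fin n) (Fin n) ℂ)
    (hη : Ψᵀ * Ψ = poincareMetric n) :
    ((I ^ (k * (k - 1) / 2)) • compound n k Ψ)ᵀ *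
        ((I ^ (k * (k - 1) / 2)) • compound n k Ψ) = grassmannMetric n k ∧
    (grassmannMetric n k)ᵀ = grassmannMetric n k ∧
    ∃ e : Equiv.Perm {s : Finset (Fin n) // s.card = k},
      grassmannMetric n k = Matrix.of fun I J => if e I = J then 1 else 0 := by
  have hI : I ^ (k * (k - 1) / 2) * I ^ (k * (k - 1) / 2) = (-1 : ℂ) ^ (k * (k - 1) / 2) := by
    rw [← mul_pow, I_mul_I]
  refine ⟨?_, ?_, revSubsets n k, grassmannMetric_eq⟩
  · rw [transpose_smul, Matrix.smul_mul, Matrix.mul_smul, smul_smul, hI, ← compound_transpose,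
      ← compound_mul, hη, compound_poincareMetric, smul_smul, ← mul_pow, neg_one_mul, neg_neg,
      one_pow, one_smul]
  · ext S T
    rw [grassmannMetric_eq, transpose_apply, of_apply, of_apply]
    exact if_congr (revSubsets_involutive.eq_iff.trans eq_comm) rfl rfl

theorem stmt14 (n k : ℕ) (hn : 1 ≤ n) (hk : 1 ≤ k) (hkn : k ≤ n)
    (Ψ : Matrix (Fin n) (Fin n) ℂ) (hΨ : IsUnit Ψ)
    (hη : Ψᵀ * Ψ = poincareMetric n) :
    ((I ^ (k * (k - 1) / 2)) • compound n k Ψ)ᵀ *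
        ((I ^ (k * (k - 1) / 2)) • compound n k Ψ) = grassmannMetric n k ∧
    (grassmannMetric n k)ᵀ = grassmannMetric n k ∧
    ∃ e : Equiv.Perm {s : Finset (Fin n) // s.card = k},
      grassmannMetric n k = Matrix.of fun I J => if e I = J then 1 else 0 :=
  stmt14_general n k Ψ hη
end
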